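/- arXiv:2211.00880 — 2 statements merged into one kernel-verified Lean document; each statement's English description precedes it below -/
import Mathlib

section
/- Let T be a finite tree with n ≥ 2 vertices in which there exists a vertex v̄ such that all leaves of T are at distance either r or r+1 from v̄ for some r (i.e., any two leaves have depths from v̄ differing by at most 1). Then v̄ is a vertex minimizing the eccentricity of T, i.e., v̄ is a center of T. -/
/-!
Walking away from a vertex `v` along a branch of the tree, as far as possible, ends at a leaf.
Applied from `v̄` through an arbitrary vertex `x`, this puts `x` on a geodesic from `v̄` to a
leaf, so `ecc v̄ ≤ r + 1`. Applied from `u ≠ v̄` through `v̄`, it gives a leaf `l` with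
`d(u, l) = d(u, v̄) + d(v̄, l) ≥ 1 + r`, so `ecc u ≥ r + 1`.
-/

/-- A leaf of a graph is a vertex with exactly one neighbor. -/
def IsLeaf {V : Type*} (G : SimpleGraph V) (v : V) : Prop :=
  (G.neighborSet v).ncard = 1

/-- The eccentricity of a vertex: the maximum distance to any other vertex. -/
noncomputable def eccent {V : Type*} (G : SimpleGraph V) (v : V) : ℕ :=
  sSup (Set.range fun u => G.dist v u)

namespace SimpleGraph

variable {V : Type*} {G : SimpleGraph V}

lemma Walk.dist_le_length_of_mem_support {u v x : V} (p : G.Walk u v) (hx : x ∈ p.support) :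
    G.dist u x ≤ p.length := by
  classical
  exact (dist_le _).trans (p.length_takeUntil_le_length hx)

lemma IsTree.eq_penultimate_of_adj_of_dist_add_one_eq (hG : G.IsTree) {u l a : V}
    {p : G.Walk u l} (hp : p.IsPath) (hadj : G.Adj a l) (hd : G.dist u a + 1 = G.dist u l) :
    a = p.penultimate := by
  obtain ⟨q, hq, hqlen⟩ := hG.connected.exists_path_of_dist u a
  have hl : l ∉ q.support := fun hmem => by
    have := q.dist_le_length_of_mem_support hmem
    omega
  exact hG.isAcyclic.eq_penultimate_of_adj_end hp hadj.symm
    (hG.isAcyclic.mem_support_of_ne_mem_support_of_adj_of_isPath hp hq hadj.symm hl)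

lemma IsTree.isLeaf_of_forall_adj_dist_le (hG : G.IsTree) {u l : V} (hne : u ≠ l)
    (hfar : ∀ w, G.Adj l w → G.dist u w ≤ G.dist u l) : IsLeaf G l := by
  obtain ⟨p, hp, hplen⟩ := hG.connected.exists_path_of_dist u l
  have hnil : ¬ p.Nil := by
    rw [Walk.not_nil_iff_lt_length, hplen]
    exact hG.connected.pos_dist_of_ne hne
  refine Set.ncard_eq_one.mpr ⟨p.penultimate, Set.ext fun w => ⟨fun hw => ?_, ?_⟩⟩
  · have hw : G.Adj l w := hw
    have hcloser : G.dist u w + 1 = G.dist u l := by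
      rcases hG.dist_eq_dist_add_one_of_adj u hw with h | h
      · exact h.symm
      · have := hfar w hw
        omega
    exact hG.eq_penultimate_of_adj_of_dist_add_one_eq hp hw.symm hcloser
  · rintro rfl
    exact (Walk.adj_penultimate hnil).symm

lemma IsTree.exists_isLeaf_dist_eq_add [Finite V] [Nontrivial V] (hG : G.IsTree) (u v : V) :
    ∃ l, IsLeaf G l ∧ G.dist u l = G.dist u v + G.dist v l := by
  set S := {x | G.dist u x = G.dist u v + G.dist v x}
  have hvS : v ∈ S := by simp [S]
  obtain ⟨l, hlS, hlmax⟩ := S.exists_max_image (G.dist u) S.toFinite ⟨v, hvS⟩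
  have hne : u ≠ l := by
    obtain ⟨x, hxS, hxu⟩ : ∃ x ∈ S, x ≠ u := by
      obtain ⟨x, hx⟩ := exists_ne u
      by_cases hvu : v = u
      · subst hvu
        exact ⟨x, by simp [S], hx⟩
      · exact ⟨v, hvS, hvu⟩
    rintro rfl
    have hxl := hlmax x hxS
    rw [dist_self] at hxl
    have := hG.connected.pos_dist_of_ne hxu.symm
    omega
  refine ⟨l, hG.isLeaf_of_forall_adj_dist_le hne fun w hw => ?_, hlS⟩
  rcases hG.dist_eq_dist_add_one_of_adj u hw with h | h
  · omega
  -- a neighbour farther from `u` than `l` would still lie in `S`, contradicting maximality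
  · have hwl : G.dist l w = 1 := dist_eq_one_iff_adj.mpr hw
    have h₁ := hG.connected.dist_triangle (u := u) (v := v) (w := w)
    have h₂ := hG.connected.dist_triangle (u := v) (v := l) (w := w)
    have hwS : w ∈ S := by
      simp only [S, Set.mem_ofPred_eq] at hlS ⊢
      omega
    have := hlmax w hwS
    omega

end SimpleGraph

lemma dist_le_eccent {V : Type*} [Finite V] (G : SimpleGraph V) (v u : V) :
    G.dist v u ≤ eccent G v :=
  le_csSup (Set.finite_range _).bddAbove (Set.mem_range_self u)

lemma eccent_le {V : Type*} {G : SimpleGraph V} {v : V} {k : ℕ} (h : ∀ u, G.dist v u ≤ k) :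
    eccent G v ≤ k :=
  csSup_le' (Set.forall_mem_range.mpr h)

/-- Let `T` be a finite tree with `n ≥ 2` vertices containing a vertex `v̄` such that all
leaves of `T` are at distance `r` or `r+1` from `v̄` for some `r`.  Then `v̄` minimizes the
eccentricity, i.e. `v̄` is a center of `T`. -/
theorem balanced_vertex_is_center {V : Type*} [Fintype V]
    (T : SimpleGraph V) (hT : T.IsTree) (hn : 2 ≤ Fintype.card V) (vbar : V)
    (hbal : ∃ r : ℕ, ∀ l : V, IsLeaf T l → T.dist vbar l = r ∨ T.dist vbar l = r + 1) :
    ∀ u : V, eccent T vbar ≤ eccent T u := by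
  have : Nontrivial V := Fintype.one_lt_card_iff_nontrivial.mp hn
  obtain ⟨r, hr⟩ := hbal
  have hecc : eccent T vbar ≤ r + 1 := eccent_le fun x => by
    obtain ⟨l, hl, hdist⟩ := hT.exists_isLeaf_dist_eq_add vbar x
    rcases hr l hl with h | h <;> omega
  intro u
  rcases eq_or_ne u vbar with rfl | hu
  · exact le_rfl
  obtain ⟨l, hl, hdist⟩ := hT.exists_isLeaf_dist_eq_add u vbar
  have hpos := hT.connected.pos_dist_of_ne hu
  have hle := dist_le_eccent T u l
  rcases hr l hl with h | h <;> omega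
end

section
/- Let T be a finite tree and let (G_1 ⊆ G_2 ⊆ ... ⊆ G_N = T) be an increasing sequence of subtrees of T where G_1 is a single vertex and G_{n+1} is obtained from G_n by adding one vertex of T adjacent to G_n. Let c_n be any centroid of G_n. Then for all n, dist(c_n, c_{n+1}) ≤ 1 in T. -/
/-!
In a tree, a centroid `c` of a subtree `s` has all branches (components of `s - c`) of size at
most `|s| / 2`: otherwise the neighbour of `c` in a larger branch would have smaller branches.
Adding a vertex `w` outside `s` makes it a leaf of `insert w s`, so every branch at `c` grows by at
most one. If a centroid `c'` of `insert w s` were neither `c` nor adjacent to it, the branch at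
`c` containing `c'` and the branch at `c'` containing `c` would cover `insert w s` and share the
neighbour of `c` towards `c'`, so their sizes would add up to more than `|s| + 1`, against the
two bounds `|s| / 2 + 1` and `(|s| + 1) / 2`.
-/

noncomputable def delCompSize {V : Type*} (G : SimpleGraph V) (c : V)
    (K : (G.induce {v | v ≠ c}).ConnectedComponent) : ℕ :=
  Nat.card {x : {v // v ≠ c} // (G.induce {v | v ≠ c}).connectedComponentMk x = K}

noncomputable def maxCompSize {V : Type*} (G : SimpleGraph V) (c : V) : ℕ :=
  sSup (Set.range fun K => delCompSize G c K)

/-- `x` is a centroid of the subgraph of `G` induced on the finite vertex set `s`: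
it minimizes, over vertices of `s`, the maximum size of the components obtained by
deleting it from `G.induce s`. -/
def IsCentroidOn {V : Type*} (G : SimpleGraph V) (s : Finset V) (x : V) : Prop :=
  ∃ h : x ∈ s, ∀ y : (s : Set V),
    maxCompSize (G.induce (s : Set V)) ⟨x, h⟩ ≤ maxCompSize (G.induce (s : Set V)) y

open Finset

namespace SimpleGraph

variable {V : Type*} {G : SimpleGraph V}

def ReachableWithin (G : SimpleGraph V) (s : Set V) (x y : V) : Prop :=
  ∃ p : G.Walk x y, ∀ z ∈ p.support, z ∈ s

def componentWithin (G : SimpleGraph V) (s : Set V) (x : V) : Set V :=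
  {y | G.ReachableWithin s x y}

namespace ReachableWithin

variable {s t : Set V} {x y z : V}

lemma refl (hx : x ∈ s) : G.ReachableWithin s x x := ⟨.nil, by simpa⟩

lemma of_adj (h : G.Adj x y) (hx : x ∈ s) (hy : y ∈ s) : G.ReachableWithin s x y :=
  ⟨h.toWalk, by simp [hx, hy]⟩

lemma symm (h : G.ReachableWithin s x y) : G.ReachableWithin s y x := by
  obtain ⟨p, hp⟩ := h
  exact ⟨p.reverse, by simpa using hp⟩

lemma trans (h : G.ReachableWithin s x y) (h' : G.ReachableWithin s y z) :
    G.ReachableWithin s x z := by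
  obtain ⟨p, hp⟩ := h
  obtain ⟨q, hq⟩ := h'
  exact ⟨p.append q, fun a ha => (Walk.mem_support_append_iff _ _).1 ha |>.elim (hp a) (hq a)⟩

lemma mono (h : G.ReachableWithin s x y) (hst : s ⊆ t) : G.ReachableWithin t x y := by
  obtain ⟨p, hp⟩ := h
  exact ⟨p, fun a ha => hst (hp a ha)⟩

lemma left_mem (h : G.ReachableWithin s x y) : x ∈ s := by
  obtain ⟨p, hp⟩ := h
  exact hp x p.start_mem_support

lemma right_mem (h : G.ReachableWithin s x y) : y ∈ s :=
  h.symm.left_mem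

lemma sdiff_singleton_or {u v : V} (h : G.ReachableWithin s z u) (hvu : v ≠ u) :
    G.ReachableWithin (s \ {v}) z u ∨ G.ReachableWithin (s \ {u}) z v := by
  obtain ⟨p, hp⟩ := h
  induction p with
  | nil => exact .inl (refl ⟨hp _ (by simp), hvu.symm⟩)
  | @cons a b u hab p ih =>
    have ha : a ∈ s := hp a (by simp)
    rcases eq_or_ne a v with rfl | hav
    · exact .inr (refl ⟨ha, hvu⟩)
    rcases eq_or_ne a u with rfl | hau
    · exact .inl (refl ⟨ha, hav⟩)
    rcases ih hvu fun w hw => hp w (by simp [hw]) with h | h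
    · exact .inl ((of_adj (s := s \ {v}) hab ⟨ha, hav⟩ h.left_mem).trans h)
    · exact .inr ((of_adj (s := s \ {u}) hab ⟨ha, hau⟩ h.left_mem).trans h)

lemma exists_adj_reachableWithin_sdiff {c : V} (h : G.ReachableWithin s c x) (hcx : c ≠ x) :
    ∃ u, G.Adj c u ∧ G.ReachableWithin (s \ {c}) u x := by
  classical
  obtain ⟨p, hp⟩ := h
  obtain ⟨u, hcu, q, hq⟩ := p.bypass.exists_eq_cons_of_ne hcx
  have hpath := p.bypass_isPath
  rw [hq, Walk.cons_isPath_iff] at hpath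
  refine ⟨u, hcu, q, fun z hz => ⟨hp z (p.support_bypass_subset_support ?_), ?_⟩⟩
  · simp [hq, hz]
  · rintro rfl
    exact hpath.2 hz

/-- A walk enters and leaves `w` through the same neighbour, so each visit to `w` can be cut out.
In the induction, `a` is the vertex of `t` the walk stands at, or came from if it stands at `w`. -/
lemma of_insert {w : V} (hw : ∀ a ∈ t, ∀ b ∈ t, G.Adj a w → G.Adj b w → a = b)
    (h : G.ReachableWithin (insert w t) x y) (hxw : x ≠ w) (hyw : y ≠ w) :
    G.ReachableWithin t x y := by
  obtain ⟨p, hp⟩ := h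
  suffices key : ∀ a ∈ t, (a = x ∨ x = w ∧ G.Adj a w) → G.ReachableWithin t a y from
    key x ((hp x p.start_mem_support).resolve_left hxw) (.inl rfl)
  clear hxw
  induction p with
  | nil =>
    rintro a ha (rfl | ⟨rfl, -⟩)
    exacts [refl ha, absurd rfl hyw]
  | @cons x v y hxv p ih =>
    have hp' : ∀ z ∈ p.support, z ∈ insert w t := fun z hz => hp z (by simp [hz])
    rintro a ha hax
    rcases eq_or_ne v w with rfl | hvw
    · obtain rfl : a = x := hax.resolve_right fun h => hxv.ne h.1
      exact ih hyw hp' a ha (.inr ⟨rfl, hxv⟩)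
    have hv : v ∈ t := (hp' v p.start_mem_support).resolve_left hvw
    have hvy := ih hyw hp' v hv (.inl rfl)
    rcases hax with rfl | ⟨rfl, haw⟩
    · exact (of_adj hxv ha hv).trans hvy
    · rwa [hw a ha v hv haw hxv.symm]

end ReachableWithin

lemma componentWithin_subset (s : Set V) (x : V) : G.componentWithin s x ⊆ s :=
  fun _ h => ReachableWithin.right_mem h

lemma componentWithin_eq {s : Set V} {x y : V} (h : G.ReachableWithin s x y) :
    G.componentWithin s x = G.componentWithin s y :=
  Set.ext fun _ => ⟨h.symm.trans, h.trans⟩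

lemma reachableWithin_induce_iff {s : Set V} {t : Set s} {a b : s} :
    (G.induce s).ReachableWithin t a b ↔ G.ReachableWithin (Subtype.val '' t) a b := by
  constructor
  · rintro ⟨p, hp⟩
    obtain ⟨q, hq⟩ : ∃ q : G.Walk a b, q.support = p.support.map Subtype.val :=
      ⟨p.map (Embedding.induce s).toHom, Walk.support_map _ _⟩
    refine ⟨q, fun z hz => ?_⟩
    rw [hq, List.mem_map] at hz
    obtain ⟨z, hz, rfl⟩ := hz
    exact ⟨z, hp z hz, rfl⟩
  · rintro ⟨p, hp⟩
    have hs : ∀ z ∈ p.support, z ∈ s := fun z hz => by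
      obtain ⟨z, -, rfl⟩ := hp z hz
      exact z.2
    refine ⟨p.induce s hs, fun z hz => ?_⟩
    rw [Walk.support_induce, List.mem_attachWith] at hz
    obtain ⟨z', hz', hzz⟩ := hp z hz
    rwa [← Subtype.val_injective hzz]

lemma reachable_induce_iff {s : Set V} {a b : s} :
    (G.induce s).Reachable a b ↔ G.ReachableWithin s a b := by
  have : (G.induce s).Reachable a b ↔ (G.induce s).ReachableWithin Set.univ a b :=
    ⟨fun ⟨p⟩ => ⟨p, by simp⟩, fun ⟨p, _⟩ => ⟨p⟩⟩
  rw [this, reachableWithin_induce_iff, Set.image_univ, Subtype.range_coe]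

lemma Preconnected.reachableWithin {s : Set V} (hs : (G.induce s).Preconnected) {x y : V}
    (hx : x ∈ s) (hy : y ∈ s) : G.ReachableWithin s x y :=
  reachable_induce_iff.1 (hs ⟨x, hx⟩ ⟨y, hy⟩)

lemma IsAcyclic.disjoint_componentWithin (hG : G.IsAcyclic) {c u : V} (hcu : G.Adj c u)
    (s t : Set V) :
    Disjoint (G.componentWithin (s \ {u}) c) (G.componentWithin (t \ {c}) u) := by
  rw [Set.disjoint_left]
  rintro z ⟨p, hp⟩ ⟨q, hq⟩
  have hbridge := isBridge_iff_forall_walk_mem_edges.1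
    (isAcyclic_iff_forall_adj_isBridge.1 hG hcu) (p.append q.reverse)
  rw [Walk.edges_append, Walk.edges_reverse, List.mem_append, List.mem_reverse] at hbridge
  rcases hbridge with he | he
  · exact (hp u (p.snd_mem_support_of_mem_edges he)).2 rfl
  · exact (hq c (q.fst_mem_support_of_mem_edges he)).2 rfl

lemma IsAcyclic.eq_of_adj_of_notMem (hG : G.IsAcyclic) {s : Set V} {a b w : V}
    (hab : G.ReachableWithin s a b) (hw : w ∉ s) (ha : G.Adj a w) (hb : G.Adj b w) :
    a = b := by
  by_contra hne
  refine (hG.disjoint_componentWithin ha (insert w s) (insert w s)).notMem_of_mem_left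
    (a := b) (hab.mono fun z hz => ⟨.inr hz, ?_⟩) ?_
  · rintro rfl
    exact hw hz
  · exact .of_adj hb.symm ⟨.inl rfl, fun h => ha.ne h.symm⟩
      ⟨.inr hab.right_mem, fun h => hne h.symm⟩

lemma finite_componentWithin (s : Finset V) (t : Set V) (ht : t ⊆ s) (x : V) :
    (G.componentWithin t x).Finite :=
  s.finite_toSet.subset ((componentWithin_subset t x).trans ht)

lemma delCompSize_induce {s : Set V} (c : s) (x : {v : s // v ≠ c}) :
    delCompSize (G.induce s) c (((G.induce s).induce {v | v ≠ c}).connectedComponentMk x) =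
      (G.componentWithin (s \ {c.1}) x.1.1).ncard := by
  have hval : Subtype.val '' {v : s | v ≠ c} = s \ {c.1} := by
    ext z
    simp [Subtype.ext_iff, and_comm]
  have hcomp : ∀ y, ((G.induce s).induce {v | v ≠ c}).connectedComponentMk y =
      ((G.induce s).induce {v | v ≠ c}).connectedComponentMk x ↔
      y.1.1 ∈ G.componentWithin (s \ {c.1}) x.1.1 := fun y => by
    rw [ConnectedComponent.eq, reachable_induce_iff, reachableWithin_induce_iff, hval]
    exact ⟨ReachableWithin.symm, ReachableWithin.symm⟩
  refine (Nat.card_congr (Equiv.subtypeEquivRight hcomp)).trans ?_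
  change Nat.card ((fun y : ({v | v ≠ c} : Set s) => y.1.1) ⁻¹'
    G.componentWithin (s \ {c.1}) x.1.1) = _
  rw [Nat.card_coe_set_eq, Set.ncard_preimage_of_injective_subset_range]
  · exact fun a b h => Subtype.ext (Subtype.ext h)
  · intro z hz
    obtain ⟨hzs, hzc⟩ := (componentWithin_subset _ _) hz
    exact ⟨⟨⟨z, hzs⟩, fun h => hzc (congrArg Subtype.val h)⟩, rfl⟩

variable [DecidableEq V]

noncomputable def maxBranchCard (G : SimpleGraph V) (s : Finset V) (c : V) : ℕ :=
  (s.erase c).sup fun x => (G.componentWithin (↑s \ {c}) x).ncard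

lemma ncard_componentWithin_le_maxBranchCard {s : Finset V} {c x : V} (hx : x ∈ s)
    (hxc : x ≠ c) : (G.componentWithin (↑s \ {c}) x).ncard ≤ G.maxBranchCard s c :=
  le_sup (f := fun x => (G.componentWithin (↑s \ {c}) x).ncard) (mem_erase.2 ⟨hxc, hx⟩)

variable {s : Finset V} {c u v w : V}

lemma maxBranchCard_insert_le (hG : G.IsAcyclic) (hs : (G.induce ↑s).Preconnected)
    (hw : w ∉ s) (hc : c ∈ s) : G.maxBranchCard (insert w s) c ≤ G.maxBranchCard s c + 1 := by
  set t : Set V := ↑s \ {c}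
  have hwc : w ≠ c := fun h => hw (h ▸ hc)
  have hinsert : (↑(insert w s) : Set V) \ {c} = insert w t := by
    rw [coe_insert, Set.insert_sdiff_of_notMem _ (Set.notMem_singleton_iff.2 hwc)]
  have hleaf : ∀ a ∈ t, ∀ b ∈ t, G.Adj a w → G.Adj b w → a = b := fun a ha b hb haw hbw =>
    hG.eq_of_adj_of_notMem (hs.reachableWithin ha.1 hb.1) hw haw hbw
  refine Finset.sup_le fun x _ => ?_
  simp only [hinsert]
  by_cases hsub : G.componentWithin (insert w t) x ⊆ {w}
  · calc (G.componentWithin (insert w t) x).ncard ≤ ({w} : Set V).ncard :=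
          Set.ncard_le_ncard hsub
      _ ≤ G.maxBranchCard s c + 1 := by simp
  obtain ⟨z, hxz, hzw⟩ := Set.not_subset.1 hsub
  have hzt : z ∈ t := hxz.right_mem.resolve_left hzw
  have hcomp : G.componentWithin (insert w t) x ⊆ insert w (G.componentWithin t z) := by
    intro y hxy
    rcases eq_or_ne y w with rfl | hyw
    · exact .inl rfl
    · exact .inr ((hxz.symm.trans hxy).of_insert hleaf hzw hyw)
  calc (G.componentWithin (insert w t) x).ncard
      ≤ (insert w (G.componentWithin t z)).ncard :=
        Set.ncard_le_ncard hcomp ((finite_componentWithin s t Set.sdiff_subset z).insert w)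
    _ ≤ (G.componentWithin t z).ncard + 1 := Set.ncard_insert_le _ _
    _ ≤ G.maxBranchCard s c + 1 := by
        gcongr
        exact ncard_componentWithin_le_maxBranchCard hzt.1 hzt.2

/-- The branch at `u` containing `v` and the branch at `v` containing `u` cover `s`, and share
the neighbour of `u` on a path to `v`. -/
lemma card_lt_maxBranchCard_add (hs : (G.induce ↑s).Preconnected) (hu : u ∈ s) (hv : v ∈ s)
    (huv : u ≠ v) (hadj : ¬G.Adj u v) : s.card < G.maxBranchCard s u + G.maxBranchCard s v := by
  set X := G.componentWithin (↑s \ {u}) v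
  set Y := G.componentWithin (↑s \ {v}) u
  have hXfin : X.Finite := finite_componentWithin s _ Set.sdiff_subset v
  have hYfin : Y.Finite := finite_componentWithin s _ Set.sdiff_subset u
  have hcover : (↑s : Set V) ⊆ X ∪ Y := fun z hz =>
    ((hs.reachableWithin hz hu).sdiff_singleton_or huv.symm).elim (.inr ∘ .symm) (.inl ∘ .symm)
  obtain ⟨a, hua, hav⟩ := (hs.reachableWithin hu hv).exists_adj_reachableWithin_sdiff huv
  have haY : a ∈ Y :=
    .of_adj hua ⟨hu, huv⟩ ⟨hav.left_mem.1, fun h => hadj (h ▸ hua)⟩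
  have hinter : 0 < (X ∩ Y).ncard :=
    (Set.ncard_pos (hXfin.inter_of_left Y)).2 ⟨a, hav.symm, haY⟩
  have hunion : s.card ≤ (X ∪ Y).ncard := by
    rw [← Set.ncard_coe_finset]
    exact Set.ncard_le_ncard hcover (hXfin.union hYfin)
  have hX : X.ncard ≤ G.maxBranchCard s u := ncard_componentWithin_le_maxBranchCard hv huv.symm
  have hY : Y.ncard ≤ G.maxBranchCard s v := ncard_componentWithin_le_maxBranchCard hu huv
  have := Set.ncard_union_add_ncard_inter X Y hXfin hYfin
  omega

/-- Deleting the neighbour `u` of `c` leaves the branch containing `c`, which avoids the branch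
`C` at `c` containing `u`, and branches inside `C \ {u}`. -/
lemma maxBranchCard_le_of_adj (hG : G.IsAcyclic) (hs : (G.induce ↑s).Preconnected) (hc : c ∈ s)
    (hu : u ∈ s) (hcu : G.Adj c u) :
    G.maxBranchCard s u ≤ max (s.card - (G.componentWithin (↑s \ {c}) u).ncard)
      ((G.componentWithin (↑s \ {c}) u).ncard - 1) := by
  set C := G.componentWithin (↑s \ {c}) u
  have hCs : C ⊆ ↑s := (componentWithin_subset _ u).trans Set.sdiff_subset
  have hCfin : C.Finite := finite_componentWithin s _ Set.sdiff_subset u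
  refine Finset.sup_le fun y hy => ?_
  obtain ⟨-, hys⟩ := mem_erase.1 hy
  by_cases hyc : G.ReachableWithin (↑s \ {u}) y c
  · have hsub : G.componentWithin (↑s \ {u}) y ⊆ ↑s \ C := fun z hz =>
      ⟨hz.right_mem.1,
        (hG.disjoint_componentWithin hcu _ _).notMem_of_mem_left (hyc.symm.trans hz)⟩
    calc (G.componentWithin (↑s \ {u}) y).ncard ≤ (↑s \ C).ncard :=
          Set.ncard_le_ncard hsub s.finite_toSet.sdiff
      _ = s.card - C.ncard := by rw [Set.ncard_sdiff hCs hCfin, Set.ncard_coe_finset]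
      _ ≤ _ := le_max_left _ _
  · have hsub : G.componentWithin (↑s \ {u}) y ⊆ C \ {u} := fun z hz =>
      ⟨((hs.reachableWithin hz.right_mem.1 hc).sdiff_singleton_or hcu.ne').elim
        (fun hzc => absurd (hz.trans hzc) hyc) ReachableWithin.symm, hz.right_mem.2⟩
    calc (G.componentWithin (↑s \ {u}) y).ncard ≤ (C \ {u}).ncard :=
          Set.ncard_le_ncard hsub hCfin.sdiff
      _ = C.ncard - 1 := Set.ncard_sdiff_singleton_of_mem (.refl ⟨hu, hcu.ne'⟩)
      _ ≤ _ := le_max_right _ _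

lemma maxCompSize_induce (hc : c ∈ s) :
    maxCompSize (G.induce ↑s) ⟨c, hc⟩ = G.maxBranchCard s c := by
  apply le_antisymm
  · refine csSup_le' ?_
    rintro _ ⟨K, rfl⟩
    induction K using ConnectedComponent.ind with
    | h x =>
      dsimp only
      rw [delCompSize_induce]
      exact ncard_componentWithin_le_maxBranchCard x.1.2 fun h => x.2 (Subtype.ext h)
  · refine Finset.sup_le fun y hy => ?_
    obtain ⟨hyc, hys⟩ := mem_erase.1 hy
    have := delCompSize_induce (G := G) ⟨c, hc⟩ ⟨⟨y, hys⟩, fun h => hyc congr($h.1)⟩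
    rw [← this]
    exact le_csSup (Set.finite_range _).bddAbove ⟨_, rfl⟩

end SimpleGraph

open SimpleGraph

section Centroid

variable {V : Type*} [DecidableEq V] {G : SimpleGraph V} {s : Finset V} {c u w : V}

lemma IsCentroidOn.maxBranchCard_le (h : IsCentroidOn G s c) (hu : u ∈ s) :
    G.maxBranchCard s c ≤ G.maxBranchCard s u := by
  obtain ⟨hc, hmin⟩ := h
  simpa only [maxCompSize_induce] using hmin ⟨u, hu⟩

/-- A branch with more than half of the vertices would make the neighbour of `c` inside it a
better centroid. -/
lemma IsCentroidOn.two_mul_maxBranchCard_le (hG : G.IsAcyclic)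
    (hs : (G.induce ↑s).Preconnected) (h : IsCentroidOn G s c) :
    2 * G.maxBranchCard s c ≤ s.card := by
  by_contra! hbig
  obtain ⟨x, hx, hxbig⟩ := Finset.lt_sup_iff.1 (show s.card / 2 < G.maxBranchCard s c by omega)
  obtain ⟨hxc, hxs⟩ := mem_erase.1 hx
  obtain ⟨u, hcu, hux⟩ :=
    (hs.reachableWithin h.1 hxs).exists_adj_reachableWithin_sdiff hxc.symm
  have hus : u ∈ s := hux.left_mem.1
  rw [← componentWithin_eq hux] at hxbig
  have hCu := ncard_componentWithin_le_maxBranchCard (G := G) hus hcu.ne'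
  have hCs : (G.componentWithin (↑s \ {c}) u).ncard ≤ s.card := by
    rw [← Set.ncard_coe_finset]
    exact Set.ncard_le_ncard ((componentWithin_subset _ u).trans Set.sdiff_subset)
  have := maxBranchCard_le_of_adj hG hs h.1 hus hcu
  have := h.maxBranchCard_le hus
  omega

lemma IsCentroidOn.eq_or_adj_of_insert (hG : G.IsAcyclic) (hs : (G.induce ↑s).Preconnected)
    (hs' : (G.induce ↑(insert w s)).Preconnected) (hw : w ∉ s) {c' : V}
    (hc : IsCentroidOn G s c) (hc' : IsCentroidOn G (insert w s) c') : c = c' ∨ G.Adj c c' := by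
  by_contra! ⟨hne, hnadj⟩
  have h₁ := hc.two_mul_maxBranchCard_le hG hs
  have h₂ := hc'.two_mul_maxBranchCard_le hG hs'
  have h₃ := maxBranchCard_insert_le hG hs hw hc.1
  have h₄ := card_lt_maxBranchCard_add hs' (mem_insert_of_mem hc.1) hc'.1 hne hnadj
  rw [card_insert_of_notMem hw] at h₂ h₄
  omega

lemma connected_induce_of_grow {N : ℕ} {A : ℕ → Finset V} (hA1 : ∃ x : V, A 1 = {x})
    (hgrow : ∀ n, 1 ≤ n → n < N →
      ∃ w : V, w ∉ A n ∧ (∃ u ∈ A n, G.Adj u w) ∧ A (n + 1) = insert w (A n))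
    {n : ℕ} (hn : 1 ≤ n) (hnN : n ≤ N) : (G.induce (A n : Set V)).Connected := by
  induction n, hn using Nat.le_induction with
  | base =>
    obtain ⟨x, hx⟩ := hA1
    rw [hx, coe_singleton, induce_singleton_eq_top]
    exact connected_top
  | succ n hn ih =>
    obtain ⟨w, -, ⟨u, hu, huw⟩, hA⟩ := hgrow n hn hnN
    rw [hA, coe_insert, ← Set.union_singleton]
    refine connected_induce_union (ih (by omega)).preconnected ?_ hu rfl huw
    rw [induce_singleton_eq_top]
    exact connected_top.preconnected

end Centroid

theorem growing_subtree_centroid_moves_le_one_general {V : Type*} [DecidableEq V]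
    (T : SimpleGraph V) (hT : T.IsTree) (N : ℕ)
    (A : ℕ → Finset V)
    (hA1 : ∃ x : V, A 1 = {x})
    (hgrow : ∀ n, 1 ≤ n → n < N →
      ∃ w : V, w ∉ A n ∧ (∃ u ∈ A n, T.Adj u w) ∧ A (n + 1) = insert w (A n)) :
    ∀ c : ℕ → V, (∀ n, 1 ≤ n → n ≤ N → IsCentroidOn T (A n) (c n)) →
      ∀ n, 1 ≤ n → n < N → T.dist (c n) (c (n + 1)) ≤ 1 := by
  intro c hc n hn hnN
  obtain ⟨w, hw, -, hA⟩ := hgrow n hn hnN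
  have hconn : ∀ k, 1 ≤ k → k ≤ N → (T.induce (A k : Set V)).Preconnected := fun k hk hkN =>
    (connected_induce_of_grow hA1 hgrow hk hkN).preconnected
  have hcn' := hc (n + 1) (by omega) hnN
  have hconn' := hconn (n + 1) (by omega) hnN
  rw [hA] at hcn' hconn'
  rcases (hc n hn hnN.le).eq_or_adj_of_insert hT.isAcyclic (hconn n hn hnN.le) hconn' hw hcn'
    with h | h
  · simp [h]
  · exact (dist_eq_one_iff_adj.2 h).le

/-- Let `T` be a finite tree and `G_1 ⊆ ⋯ ⊆ G_N = T` an increasing sequence of subtrees,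
where `G_1` is a single vertex and `G_{n+1}` is obtained from `G_n` by adding one vertex
adjacent to `G_n`.  If `c_n` is any centroid of `G_n`, then `dist_T(c_n, c_{n+1}) ≤ 1`. -/
theorem growing_subtree_centroid_moves_le_one {V : Type*} [Fintype V] [DecidableEq V]
    (T : SimpleGraph V) (hT : T.IsTree) (N : ℕ) (hN : 1 ≤ N)
    (A : ℕ → Finset V)
    (hA1 : ∃ x : V, A 1 = {x})
    (hgrow : ∀ n, 1 ≤ n → n < N →
      ∃ w : V, w ∉ A n ∧ (∃ u ∈ A n, T.Adj u w) ∧ A (n + 1) = insert w (A n))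
    (hAN : A N = Finset.univ) :
    ∀ c : ℕ → V, (∀ n, 1 ≤ n → n ≤ N → IsCentroidOn T (A n) (c n)) →
      ∀ n, 1 ≤ n → n < N → T.dist (c n) (c (n + 1)) ≤ 1 :=
  growing_subtree_centroid_moves_le_one_general T hT N A hA1 hgrow
end
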